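/- Let A ⊂ B be full subcategories of an abelian category, both closed under extensions, such that (a) every object of B admits an epimorphism from an object of A with kernel in B, and (b) for any short exact sequence 0 → A' → A → B' → 0 in B with A ∈ A, also A' ∈ A. Then the inclusion induces an isomorphism K_0(A) ≅ K_0(B) of Grothendieck groups. -/

import Mathlib

/-!
Every object `X` of `B` has a resolution `0 → K → A → X → 0` with `K, A ∈ A`: take the
epimorphism of (a), whose kernel lies in `A` by (b). The class `[A] - [K] ∈ K₀(A)` does not
depend on the resolution (Schanuel: the fibre product of two resolutions is an extension of
each middle term by the other kernel), and it is additive on short exact sequences of `B`: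
pulling back a resolution of `X₂` along `X₁ ⟶ X₂` yields compatible resolutions of `X₁` and
`X₃`. This defines an inverse `K₀(B) → K₀(A)` of the map induced by the inclusion.
-/

open CategoryTheory CategoryTheory.Limits

/-- K₀ of the full subcategory of an abelian category `C` spanned by a
predicate `P`, presented by generators and short-exact-sequence relations. -/
def K0Sub {C : Type*} [Category C] [Abelian C] (P : C → Prop) : Type _ :=
  FreeAbelianGroup {X : C // P X} ⧸
    AddSubgroup.closure
      {a | ∃ (S : ShortComplex C) (hS : S.ShortExact)
          (h1 : P S.X₁) (h2 : P S.X₂) (h3 : P S.X₃),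
          a = FreeAbelianGroup.of (⟨S.X₂, h2⟩ : {X : C // P X}) -
            FreeAbelianGroup.of ⟨S.X₁, h1⟩ - FreeAbelianGroup.of ⟨S.X₃, h3⟩}

noncomputable instance {C : Type*} [Category C] [Abelian C] (P : C → Prop) :
    AddCommGroup (K0Sub P) :=
  QuotientAddGroup.Quotient.addCommGroup _

section

variable {C : Type*} [Category C] [Abelian C]

namespace CategoryTheory.IsPullback

lemma shortExact_fst {S : ShortComplex C} (hS : S.ShortExact) {Q Y : C} {fst : Q ⟶ Y}
    {snd : Q ⟶ S.X₂} {t : Y ⟶ S.X₃} (h : IsPullback fst snd t S.g) :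
    (ShortComplex.mk (h.lift 0 S.f (by simp)) fst (h.lift_fst _ _ _)).ShortExact := by
  have := hS.mono_f
  have := hS.epi_g
  have : Mono (h.lift 0 S.f (by simp)) := mono_of_mono_fac (h.lift_snd _ _ _)
  have : Epi fst := by
    rw [← h.isoPullback_hom_fst]
    infer_instance
  refine .mk' ?_ ‹_› ‹_›
  rw [ShortComplex.exact_iff_exact_up_to_refinements]
  intro T q hq
  have hqp : (q ≫ snd) ≫ S.g = 0 := by
    rw [Category.assoc, ← h.w, ← Category.assoc, hq, zero_comp]
  refine ⟨T, 𝟙 T, inferInstance, hS.exact.lift _ hqp, h.hom_ext ?_ ?_⟩ <;> simp [hq]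

lemma shortExact_snd_comp {S : ShortComplex C} (hS : S.ShortExact) {Q A : C} {fst : Q ⟶ S.X₁}
    {snd : Q ⟶ A} {p : A ⟶ S.X₂} [Epi p] (h : IsPullback fst snd S.f p) :
    (ShortComplex.mk snd (p ≫ S.g) (by rw [← Category.assoc, ← h.w]; simp)).ShortExact := by
  have := hS.mono_f
  have := hS.epi_g
  have : Mono snd := by
    rw [← h.isoPullback_hom_snd]
    infer_instance
  refine .mk' ?_ ‹_› (epi_comp _ _)
  rw [ShortComplex.exact_iff_exact_up_to_refinements]
  intro T a ha
  refine ⟨T, 𝟙 T, inferInstance, h.lift (hS.exact.lift (a ≫ p) (by simpa using ha)) a (by simp),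
    by simp⟩

end CategoryTheory.IsPullback

namespace K0Sub

variable {P Q : C → Prop}

noncomputable def mk (X : C) (hX : P X) : K0Sub P :=
  QuotientAddGroup.mk (FreeAbelianGroup.of ⟨X, hX⟩)

lemma mk_X₂_eq_add {S : ShortComplex C} (hS : S.ShortExact) (h₁ : P S.X₁) (h₂ : P S.X₂)
    (h₃ : P S.X₃) : mk S.X₂ h₂ = mk S.X₁ h₁ + mk S.X₃ h₃ := by
  rw [← sub_eq_zero, sub_add_eq_sub_sub]
  exact (QuotientAddGroup.eq_zero_iff _).2 (AddSubgroup.subset_closure ⟨S, hS, h₁, h₂, h₃, rfl⟩)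

variable {G : Type*} [AddCommGroup G]

noncomputable def lift (f : ∀ X, P X → G)
    (hf : ∀ S : ShortComplex C, S.ShortExact → ∀ h₁ h₂ h₃,
      f S.X₂ h₂ = f S.X₁ h₁ + f S.X₃ h₃) : K0Sub P →+ G :=
  QuotientAddGroup.lift _ (FreeAbelianGroup.lift fun X => f X.1 X.2) <|
    (AddSubgroup.closure_le _).2 <| by
      rintro _ ⟨S, hS, h₁, h₂, h₃, rfl⟩
      simp [hf S hS h₁ h₂ h₃]

@[simp]
lemma lift_mk (f : ∀ X, P X → G) (hf) (X : C) (hX : P X) : lift f hf (mk X hX) = f X hX :=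
  FreeAbelianGroup.lift_apply_of _ _

@[ext]
lemma hom_ext {φ ψ : K0Sub P →+ G} (h : ∀ X hX, φ (mk X hX) = ψ (mk X hX)) : φ = ψ :=
  QuotientAddGroup.addMonoidHom_ext _ <| FreeAbelianGroup.lift_ext _ _ fun X => h X.1 X.2

noncomputable def map (hPQ : ∀ X, P X → Q X) : K0Sub P →+ K0Sub Q :=
  lift (fun X hX => mk X (hPQ X hX)) fun _ hS _ _ _ => mk_X₂_eq_add hS _ _ _

@[simp]
lemma map_mk (hPQ : ∀ X, P X → Q X) (X : C) (hX : P X) : map hPQ (mk X hX) = mk X (hPQ X hX) :=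
  lift_mk _ _ X hX

end K0Sub

structure ShortResolution (P : C → Prop) (X : C) where
  {K : C}
  {A : C}
  ι : K ⟶ A
  π : A ⟶ X
  w : ι ≫ π = 0
  shortExact : (ShortComplex.mk ι π w).ShortExact
  mem_K : P K
  mem_A : P A

namespace ShortResolution

variable {P Q : C → Prop} {X : C}

noncomputable def k0Class (r : ShortResolution P X) : K0Sub P :=
  K0Sub.mk r.A r.mem_A - K0Sub.mk r.K r.mem_K

lemma k0Class_eq_mk (r : ShortResolution P X) (hX : P X) : r.k0Class = K0Sub.mk X hX := by
  rw [k0Class, sub_eq_iff_eq_add', K0Sub.mk_X₂_eq_add r.shortExact r.mem_K r.mem_A hX]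

def ofLE (hPQ : ∀ X, P X → Q X) (r : ShortResolution P X) : ShortResolution Q X :=
  ⟨r.ι, r.π, r.w, r.shortExact, hPQ _ r.mem_K, hPQ _ r.mem_A⟩

lemma map_k0Class (hPQ : ∀ X, P X → Q X) (r : ShortResolution P X) :
    K0Sub.map hPQ r.k0Class = (r.ofLE hPQ).k0Class := by
  simp [k0Class, ofLE]

/-- Schanuel's lemma in `K₀`: the fibre product of the two middle terms is an extension of
each of them by the kernel of the other resolution. -/
lemma k0Class_eq (hext : ∀ S : ShortComplex C, S.ShortExact → P S.X₁ → P S.X₃ → P S.X₂)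
    (r r' : ShortResolution P X) : r.k0Class = r'.k0Class := by
  have h := IsPullback.of_hasPullback r.π r'.π
  have hK' := h.shortExact_fst r'.shortExact
  have hK := h.flip.shortExact_fst r.shortExact
  have hQ := hext _ hK' r'.mem_K r.mem_A
  have e' := K0Sub.mk_X₂_eq_add hK' r'.mem_K hQ r.mem_A
  have e := K0Sub.mk_X₂_eq_add hK r.mem_K hQ r'.mem_A
  rw [k0Class, k0Class, sub_eq_sub_iff_add_eq_add, add_comm, ← e', e, add_comm]

end ShortResolution

lemma nonempty_shortResolution {PA PB : C → Prop} (hsub : ∀ X, PA X → PB X)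
    (hb : ∀ S : ShortComplex C, S.ShortExact → PB S.X₁ → PB S.X₂ → PB S.X₃ →
      PA S.X₂ → PA S.X₁)
    (ha : ∀ X : C, PB X → ∃ (A₀ : C) (_ : PA A₀) (p : A₀ ⟶ X), Epi p ∧ PB (kernel p))
    {X : C} (hX : PB X) : Nonempty (ShortResolution PA X) := by
  obtain ⟨A, hA, p, hp, hK⟩ := ha X hX
  have hS : (ShortComplex.kernelSequence p).ShortExact :=
    .mk' (ShortComplex.kernelSequence_exact p) inferInstance hp
  exact ⟨⟨_, _, _, hS, hb _ hS hK (hsub _ hA) hX hA, hA⟩⟩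

/-- Pulling back a resolution `0 ⟶ K ⟶ A ⟶ X₂ ⟶ 0` along `X₁ ⟶ X₂` gives resolutions
`0 ⟶ K ⟶ Q ⟶ X₁ ⟶ 0` and `0 ⟶ Q ⟶ A ⟶ X₃ ⟶ 0`, where `Q ∈ A` by (b). -/
lemma ShortResolution.k0Class_add {PA PB : C → Prop} (hsub : ∀ X, PA X → PB X)
    (hextA : ∀ S : ShortComplex C, S.ShortExact → PA S.X₁ → PA S.X₃ → PA S.X₂)
    (hextB : ∀ S : ShortComplex C, S.ShortExact → PB S.X₁ → PB S.X₃ → PB S.X₂)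
    (hb : ∀ S : ShortComplex C, S.ShortExact → PB S.X₁ → PB S.X₂ → PB S.X₃ →
      PA S.X₂ → PA S.X₁) {S : ShortComplex C} (hS : S.ShortExact) (h₁ : PB S.X₁)
    (h₃ : PB S.X₃) (r₁ : ShortResolution PA S.X₁) (r₂ : ShortResolution PA S.X₂)
    (r₃ : ShortResolution PA S.X₃) : r₂.k0Class = r₁.k0Class + r₃.k0Class := by
  have := r₂.shortExact.epi_g
  have h := IsPullback.of_hasPullback S.f r₂.π
  have hK := h.shortExact_fst r₂.shortExact
  have hA := h.shortExact_snd_comp hS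
  have hQ : PA (pullback S.f r₂.π) :=
    hb _ hA (hextB _ hK (hsub _ r₂.mem_K) h₁) (hsub _ r₂.mem_A) h₃ r₂.mem_A
  rw [r₁.k0Class_eq hextA ⟨_, _, _, hK, r₂.mem_K, hQ⟩,
    r₃.k0Class_eq hextA ⟨_, _, _, hA, hQ, r₂.mem_A⟩]
  simp only [ShortResolution.k0Class]
  abel

end

theorem stmt_16 {C : Type*} [Category C] [Abelian C]
    (PA PB : C → Prop) (hsub : ∀ X, PA X → PB X)
    -- both closed under extensions
    (hextA : ∀ S : ShortComplex C, S.ShortExact → PA S.X₁ → PA S.X₃ → PA S.X₂)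
    (hextB : ∀ S : ShortComplex C, S.ShortExact → PB S.X₁ → PB S.X₃ → PB S.X₂)
    -- (a) every object of B admits an epimorphism from an object of A with
    -- kernel in B
    (ha : ∀ X : C, PB X → ∃ (A₀ : C) (_ : PA A₀) (p : A₀ ⟶ X),
      Epi p ∧ PB (kernel p))
    -- (b) for any short exact sequence 0 → A' → A → B' → 0 in B with A in A,
    -- also A' in A
    (hb : ∀ S : ShortComplex C, S.ShortExact → PB S.X₁ → PB S.X₂ → PB S.X₃ →
      PA S.X₂ → PA S.X₁) :
    -- the inclusion induces an isomorphism K₀(A) ≅ K₀(B)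
    ∃ e : K0Sub PA ≃+ K0Sub PB,
      ∀ (X : C) (hX : PA X),
        e (QuotientAddGroup.mk (FreeAbelianGroup.of ⟨X, hX⟩)) =
          QuotientAddGroup.mk (FreeAbelianGroup.of ⟨X, hsub X hX⟩) := by
  have r : ∀ X, PB X → ShortResolution PA X := fun X hX =>
    (nonempty_shortResolution hsub hb ha hX).some
  let ψ : K0Sub PB →+ K0Sub PA := K0Sub.lift (fun X hX => (r X hX).k0Class)
    fun _ hS h₁ _ h₃ => ShortResolution.k0Class_add hsub hextA hextB hb hS h₁ h₃ _ _ _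
  refine ⟨AddMonoidHom.toAddEquiv (K0Sub.map hsub) ψ ?_ ?_, K0Sub.map_mk hsub⟩
  · ext X hX
    simp [ψ, ShortResolution.k0Class_eq_mk _ hX]
  · ext X hX
    simp [ψ, ShortResolution.map_k0Class, ShortResolution.k0Class_eq_mk _ hX]
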